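/- arXiv:2507.22849 — 4 statements merged into one kernel-verified Lean document; each statement's English description precedes it below -/
import Mathlib

section
/- Let T be a natural number, α > 0, and real numbers 0 < μᵢ ≤ μ₂ ≤ μ₁, with σ_q > 0 and σ_p(k) ≥ 0 for k = 1,…,T. Define ρ := (σ_q² + Σ_{k=1}^T (αμ₂)^{−2k} σ_p(k)²) / (σ_q² + Σ_{k=1}^T (αμ₁)^{−2k} σ_p(k)²). Then ((αμᵢ)^{2T} σ_q² + Σ_{k=1}^{T} (αμᵢ)^{2(T−k)} σ_p(k)²) / ((αμ₁)^{2T} σ_q² + Σ_{k=1}^{T} (αμ₁)^{2(T−k)} σ_p(k)²) ≤ (μ₂/μ₁)^{2T} · ρ. -/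
open Finset

lemma pow_split (c : ℝ) (hc : 0 < c) {T k : ℕ} (hk : k ≤ T) :
    c ^ (2 * T) * ((c ^ (2 * k))⁻¹) = c ^ (2 * (T - k)) := by
  have h : 2 * T = 2 * (T - k) + 2 * k := by omega
  rw [h, pow_add, mul_assoc, mul_inv_cancel₀ (by positivity), mul_one]

/-- Variance-ratio bound: for `0 < μᵢ ≤ μ₂ ≤ μ₁`,
`Var[Γᵢ]/Var[Γ₁] ≤ (μ₂/μ₁)^{2T} · ρ`. -/
theorem stmt_6 (T : ℕ) (α μi μ₂ μ₁ σq : ℝ) (σp : ℕ → ℝ)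
    (hα : 0 < α) (hμi : 0 < μi) (hi2 : μi ≤ μ₂) (h21 : μ₂ ≤ μ₁)
    (hσq : 0 < σq) (hσp : ∀ k ∈ Finset.Icc 1 T, 0 ≤ σp k) :
    ((α * μi) ^ (2 * T) * σq ^ 2 +
        ∑ k ∈ Finset.Icc 1 T, (α * μi) ^ (2 * (T - k)) * σp k ^ 2) /
      ((α * μ₁) ^ (2 * T) * σq ^ 2 +
        ∑ k ∈ Finset.Icc 1 T, (α * μ₁) ^ (2 * (T - k)) * σp k ^ 2) ≤
    (μ₂ / μ₁) ^ (2 * T) *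
      ((σq ^ 2 + ∑ k ∈ Finset.Icc 1 T, ((α * μ₂) ^ (2 * k))⁻¹ * σp k ^ 2) /
        (σq ^ 2 + ∑ k ∈ Finset.Icc 1 T, ((α * μ₁) ^ (2 * k))⁻¹ * σp k ^ 2)) := by
  have hμ₂ : 0 < μ₂ := lt_of_lt_of_le hμi hi2
  have hμ₁ : 0 < μ₁ := lt_of_lt_of_le hμ₂ h21
  have hc2 : 0 < α * μ₂ := by positivity
  have hc1 : 0 < α * μ₁ := by positivity
  have key : (μ₂ / μ₁) ^ (2 * T) *
      ((σq ^ 2 + ∑ k ∈ Finset.Icc 1 T, ((α * μ₂) ^ (2 * k))⁻¹ * σp k ^ 2) /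
        (σq ^ 2 + ∑ k ∈ Finset.Icc 1 T, ((α * μ₁) ^ (2 * k))⁻¹ * σp k ^ 2)) =
      ((α * μ₂) ^ (2 * T) * σq ^ 2 +
        ∑ k ∈ Finset.Icc 1 T, (α * μ₂) ^ (2 * (T - k)) * σp k ^ 2) /
      ((α * μ₁) ^ (2 * T) * σq ^ 2 +
        ∑ k ∈ Finset.Icc 1 T, (α * μ₁) ^ (2 * (T - k)) * σp k ^ 2) := by
    have e2 : (α * μ₂) ^ (2 * T) *
        (σq ^ 2 + ∑ k ∈ Finset.Icc 1 T, ((α * μ₂) ^ (2 * k))⁻¹ * σp k ^ 2) =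
        (α * μ₂) ^ (2 * T) * σq ^ 2 +
          ∑ k ∈ Finset.Icc 1 T, (α * μ₂) ^ (2 * (T - k)) * σp k ^ 2 := by
      rw [mul_add, Finset.mul_sum]
      congr 1
      refine Finset.sum_congr rfl fun k hk => ?_
      rw [← mul_assoc, pow_split _ hc2 (Finset.mem_Icc.mp hk).2]
    have e1 : (α * μ₁) ^ (2 * T) *
        (σq ^ 2 + ∑ k ∈ Finset.Icc 1 T, ((α * μ₁) ^ (2 * k))⁻¹ * σp k ^ 2) =
        (α * μ₁) ^ (2 * T) * σq ^ 2 +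
          ∑ k ∈ Finset.Icc 1 T, (α * μ₁) ^ (2 * (T - k)) * σp k ^ 2 := by
      rw [mul_add, Finset.mul_sum]
      congr 1
      refine Finset.sum_congr rfl fun k hk => ?_
      rw [← mul_assoc, pow_split _ hc1 (Finset.mem_Icc.mp hk).2]
    rw [← e1, ← e2, div_pow, mul_pow α μ₂, mul_pow α μ₁]
    have hα' : (α : ℝ) ^ (2 * T) ≠ 0 := by positivity
    have hμ1' : (μ₁ : ℝ) ^ (2 * T) ≠ 0 := by positivity
    field_simp
  rw [key]
  have hden : 0 < (α * μ₁) ^ (2 * T) * σq ^ 2 +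
      ∑ k ∈ Finset.Icc 1 T, (α * μ₁) ^ (2 * (T - k)) * σp k ^ 2 := by
    have : 0 ≤ ∑ k ∈ Finset.Icc 1 T, (α * μ₁) ^ (2 * (T - k)) * σp k ^ 2 :=
      Finset.sum_nonneg fun k hk => by
        have := hσp k hk; positivity
    positivity
  gcongr
end

section
/- Let T be a natural number, and let real numbers 0 < μ₂ ≤ μ₁, α > 0 with α·μ₁ > 1, σ_q > 0, and σ_p(k) satisfying 0 ≤ σ_p(k) ≤ (μ₂/μ₁)^k for k = 1,…,T be given. Define ρ := (σ_q² + Σ_{k=1}^T (αμ₂)^{−2k} σ_p(k)²) / (σ_q² + Σ_{k=1}^T (αμ₁)^{−2k} σ_p(k)²). Then ρ ≤ 1 + 1/(σ_q²·(1 − (αμ₁)^{−2})). -/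
open Finset

/-! Since `σ_p(k) ≤ (μ₂/μ₁)^k`, each numerator term `(αμ₂)^{-2k} σ_p(k)²` is at most `r^k` with
`r = (αμ₁)^{-2} < 1`, so the numerator exceeds the denominator by at most the geometric sum
`∑ r^k ≤ (1 - r)⁻¹`, while the denominator is at least `σ_q²`. -/

section LinearOrderedField

variable {K : Type*} [Field K] [LinearOrder K] [IsStrictOrderedRing K]

lemma inv_sq_mul_div_sq_le (a b : K) : (a ^ 2)⁻¹ * (a / b) ^ 2 ≤ (b ^ 2)⁻¹ := by
  rcases eq_or_ne a 0 with rfl | ha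
  · simpa using sq_nonneg b⁻¹
  · rw [div_pow, ← mul_div_assoc, inv_mul_cancel₀ (pow_ne_zero 2 ha), one_div]

lemma inv_pow_mul_sq_le_inv_pow {α μ₁ μ₂ x : K} {k : ℕ} (hα : α ≠ 0) (hx₀ : 0 ≤ x)
    (hx : x ≤ (μ₂ / μ₁) ^ k) :
    ((α * μ₂) ^ (2 * k))⁻¹ * x ^ 2 ≤ ((α * μ₁) ^ (2 * k))⁻¹ := by
  calc ((α * μ₂) ^ (2 * k))⁻¹ * x ^ 2 = (((α * μ₂) ^ k) ^ 2)⁻¹ * x ^ 2 := by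
        rw [← pow_mul, mul_comm k]
    _ ≤ (((α * μ₂) ^ k) ^ 2)⁻¹ * ((μ₂ / μ₁) ^ k) ^ 2 := by gcongr
    _ = (((α * μ₂) ^ k) ^ 2)⁻¹ * ((α * μ₂) ^ k / (α * μ₁) ^ k) ^ 2 := by
        rw [← div_pow, mul_div_mul_left _ _ hα]
    _ ≤ (((α * μ₁) ^ k) ^ 2)⁻¹ := inv_sq_mul_div_sq_le _ _
    _ = ((α * μ₁) ^ (2 * k))⁻¹ := by rw [← pow_mul, mul_comm k]

lemma sum_Icc_one_pow_le_inv_one_sub {r : K} (hr₀ : 0 ≤ r) (hr₁ : r < 1) (T : ℕ) :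
    ∑ k ∈ Icc 1 T, r ^ k ≤ (1 - r)⁻¹ := by
  calc ∑ k ∈ Icc 1 T, r ^ k = ∑ k ∈ Ico 1 (T + 1), r ^ k := by
        rw [Finset.Ico_add_one_right_eq_Icc]
    _ ≤ r ^ 1 / (1 - r) := geom_sum_Ico_le_of_lt_one hr₀ hr₁
    _ ≤ (1 - r)⁻¹ := by
        rw [pow_one, div_eq_mul_inv]
        exact mul_le_of_le_one_left (inv_nonneg.2 (sub_nonneg.2 hr₁.le)) hr₁.le

lemma div_le_one_add_sum_div {ι : Type*} (S : Finset ι) {s : K} (hs : 0 < s) (a b c : ι → K)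
    (hb : ∀ k ∈ S, 0 ≤ b k) (hc : ∀ k ∈ S, 0 ≤ c k) (hab : ∀ k ∈ S, a k ≤ b k + c k) :
    (s + ∑ k ∈ S, a k) / (s + ∑ k ∈ S, b k) ≤ 1 + (∑ k ∈ S, c k) / s := by
  have hB : 0 ≤ ∑ k ∈ S, b k := sum_nonneg hb
  have hC : 0 ≤ ∑ k ∈ S, c k := sum_nonneg hc
  have hA : ∑ k ∈ S, a k ≤ ∑ k ∈ S, b k + ∑ k ∈ S, c k := by
    rw [← sum_add_distrib]
    exact sum_le_sum hab
  have hD : 0 < s + ∑ k ∈ S, b k := by linarith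
  calc (s + ∑ k ∈ S, a k) / (s + ∑ k ∈ S, b k)
      ≤ (s + ∑ k ∈ S, b k + ∑ k ∈ S, c k) / (s + ∑ k ∈ S, b k) :=
        div_le_div_of_nonneg_right (by linarith) hD.le
    _ = 1 + (∑ k ∈ S, c k) / (s + ∑ k ∈ S, b k) := by field_simp
    _ ≤ 1 + (∑ k ∈ S, c k) / s := by gcongr; linarith

end LinearOrderedField

theorem stmt_8_general (T : ℕ) (μ₁ μ₂ α σq : ℝ) (σp : ℕ → ℝ)
    (hαμ₁ : 1 < α * μ₁)
    (hσq : 0 < σq)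
    (hσp : ∀ k ∈ Finset.Icc 1 T, 0 ≤ σp k ∧ σp k ≤ (μ₂ / μ₁) ^ k) :
    (σq ^ 2 + ∑ k ∈ Finset.Icc 1 T, ((α * μ₂) ^ (2 * k))⁻¹ * σp k ^ 2) /
      (σq ^ 2 + ∑ k ∈ Finset.Icc 1 T, ((α * μ₁) ^ (2 * k))⁻¹ * σp k ^ 2) ≤
    1 + 1 / (σq ^ 2 * (1 - ((α * μ₁) ^ 2)⁻¹)) := by
  have hα : α ≠ 0 := left_ne_zero_of_mul (zero_lt_one.trans hαμ₁).ne'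
  set r : ℝ := ((α * μ₁) ^ 2)⁻¹
  have hr₀ : 0 ≤ r := by positivity
  have hr₁ : r < 1 := inv_lt_one_of_one_lt₀ (one_lt_pow₀ hαμ₁ two_ne_zero)
  have hweight (k : ℕ) : ((α * μ₁) ^ (2 * k))⁻¹ = r ^ k := by rw [inv_pow, ← pow_mul]
  calc _ ≤ 1 + (∑ k ∈ Icc 1 T, r ^ k) / σq ^ 2 := by
        refine div_le_one_add_sum_div _ (by positivity) _ _ _ (fun k _ => by positivity)
          (fun k _ => by positivity) fun k hk => ?_
        obtain ⟨hσp₀, hσp_le⟩ := hσp k hk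
        rw [hweight]
        exact (inv_pow_mul_sq_le_inv_pow hα hσp₀ hσp_le).trans_eq (hweight k) |>.trans
          (le_add_of_nonneg_left (by positivity))
    _ ≤ 1 + (1 - r)⁻¹ / σq ^ 2 := by gcongr; exact sum_Icc_one_pow_le_inv_one_sub hr₀ hr₁ T
    _ = 1 + 1 / (σq ^ 2 * (1 - r)) := by rw [one_div, mul_inv, div_eq_mul_inv, mul_comm]

/-- Corollary 1: with `αμ₁ > 1` and the noise schedule `σ_p(k) ≤ (μ₂/μ₁)^k`,
the ratio `ρ` is bounded by the constant `1 + 1/(σ_q²(1 - (αμ₁)⁻²))`. -/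
theorem stmt_8 (T : ℕ) (μ₁ μ₂ α σq : ℝ) (σp : ℕ → ℝ)
    (hμ₂ : 0 < μ₂) (h21 : μ₂ ≤ μ₁) (hα : 0 < α) (hαμ₁ : 1 < α * μ₁)
    (hσq : 0 < σq)
    (hσp : ∀ k ∈ Finset.Icc 1 T, 0 ≤ σp k ∧ σp k ≤ (μ₂ / μ₁) ^ k) :
    (σq ^ 2 + ∑ k ∈ Finset.Icc 1 T, ((α * μ₂) ^ (2 * k))⁻¹ * σp k ^ 2) /
      (σq ^ 2 + ∑ k ∈ Finset.Icc 1 T, ((α * μ₁) ^ (2 * k))⁻¹ * σp k ^ 2) ≤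
    1 + 1 / (σq ^ 2 * (1 - ((α * μ₁) ^ 2)⁻¹)) :=
  stmt_8_general T μ₁ μ₂ α σq σp hαμ₁ hσq hσp
end

section
/- Let W be a symmetric m×m real matrix with W·𝟙 = 𝟙, where 𝟙 is the all-ones vector, and let ρ ≥ 0 be such that ‖W·v‖ ≤ ρ·‖v‖ for every v ∈ ℝᵐ with ⟨v, 𝟙⟩ = 0. Let z₁, …, z_m ∈ ℝᵈ be arbitrary vectors and let z̄ := (1/m)·Σ_{j=1}^m z_j. Then for every natural number c and every index i: ‖Σ_{j=1}^m z_j − m·Σ_{j=1}^m (W^c)_{ij}·z_j‖ ≤ m·ρ^c·√(Σ_{j=1}^m ‖z_j − z̄‖²). -/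
open Matrix Finset

/-- The Euclidean (ℓ²) norm of a finitely-indexed real vector. -/
noncomputable def euclNorm {ι : Type*} [Fintype ι] (x : ι → ℝ) : ℝ :=
  Real.sqrt (∑ i, x i ^ 2)

lemma euclNorm_nonneg {ι : Type*} [Fintype ι] (x : ι → ℝ) : 0 ≤ euclNorm x :=
  Real.sqrt_nonneg _

lemma euclNorm_sq {ι : Type*} [Fintype ι] (x : ι → ℝ) :
    euclNorm x ^ 2 = ∑ i, x i ^ 2 :=
  Real.sq_sqrt (Finset.sum_nonneg fun _ _ => sq_nonneg _)

/-- Cauchy–Schwarz for a sum of scaled vectors. -/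
lemma euclNorm_sum_smul_le {m d : ℕ} (a : Fin m → ℝ) (w : Fin m → (Fin d → ℝ)) :
    euclNorm (∑ j, a j • w j) ≤
      Real.sqrt (∑ j, a j ^ 2) * Real.sqrt (∑ j, euclNorm (w j) ^ 2) := by
  rw [← Real.sqrt_mul (Finset.sum_nonneg fun _ _ => sq_nonneg _)]
  unfold euclNorm
  apply Real.sqrt_le_sqrt
  have key : ∀ k : Fin d, ((∑ j, a j • w j) k) ^ 2 ≤ (∑ j, a j ^ 2) * ∑ j, (w j k) ^ 2 := by
    intro k
    have := Finset.sum_mul_sq_le_sq_mul_sq Finset.univ a (fun j => w j k)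
    simpa using this
  calc ∑ k, ((∑ j, a j • w j) k) ^ 2
      ≤ ∑ k, (∑ j, a j ^ 2) * ∑ j, (w j k) ^ 2 := Finset.sum_le_sum fun k _ => key k
    _ = (∑ j, a j ^ 2) * ∑ j, Real.sqrt (∑ k, (w j k) ^ 2) ^ 2 := by
        rw [← Finset.mul_sum, Finset.sum_comm]
        congr 1
        refine Finset.sum_congr rfl fun j _ => ?_
        rw [Real.sq_sqrt (Finset.sum_nonneg fun _ _ => sq_nonneg _)]

/-- Consensus inner-product approximation: after `c` gossip rounds, agent `i`'s
aggregate `m ∑_j (W^c)_{ij} z_j` approximates `∑_j z_j` with error at most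
`m ρ^c √(∑_j ‖z_j - z̄‖²)`. -/
theorem stmt_11 {m d : ℕ} (W : Matrix (Fin m) (Fin m) ℝ) (hW : W.IsSymm)
    (hW1 : W.mulVec (fun _ => 1) = fun _ => 1)
    (ρ : ℝ) (hρ : 0 ≤ ρ)
    (hcontract : ∀ v : Fin m → ℝ, v ⬝ᵥ (fun _ => 1) = 0 →
      euclNorm (W.mulVec v) ≤ ρ * euclNorm v)
    (z : Fin m → (Fin d → ℝ)) :
    ∀ (c : ℕ) (i : Fin m),
      euclNorm ((∑ j, z j) - (m : ℝ) • ∑ j, (W ^ c) i j • z j) ≤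
        (m : ℝ) * ρ ^ c *
          Real.sqrt (∑ j, (euclNorm (z j - (m : ℝ)⁻¹ • ∑ l, z l)) ^ 2) := by
  intro c i
  have hm : 0 < m := i.pos
  have hm0 : (m : ℝ) ≠ 0 := Nat.cast_ne_zero.2 hm.ne'
  -- W preserves orthogonality to 𝟙
  have horth : ∀ v : Fin m → ℝ, v ⬝ᵥ (fun _ => 1) = 0 →
      (W.mulVec v) ⬝ᵥ (fun _ => 1) = 0 := by
    intro v hv
    have : (W.mulVec v) ⬝ᵥ (fun _ => 1) = (W.mulVec (fun _ => 1)) ⬝ᵥ v := by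
      rw [dotProduct_comm, dotProduct_mulVec, ← Matrix.mulVec_transpose, hW.eq]
    rw [this, hW1, dotProduct_comm, hv]
  -- iterated contraction
  have hpow : ∀ (n : ℕ) (v : Fin m → ℝ), v ⬝ᵥ (fun _ => 1) = 0 →
      euclNorm ((W ^ n).mulVec v) ≤ ρ ^ n * euclNorm v ∧
      ((W ^ n).mulVec v) ⬝ᵥ (fun _ => 1) = 0 := by
    intro n
    induction n with
    | zero => intro v hv; simp [Matrix.one_mulVec, hv]
    | succ n ih =>
      intro v hv
      obtain ⟨h1, h2⟩ := ih v hv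
      have heq : (W ^ (n + 1)).mulVec v = W.mulVec ((W ^ n).mulVec v) := by
        rw [pow_succ', Matrix.mulVec_mulVec]
      constructor
      · rw [heq]
        calc euclNorm (W.mulVec ((W ^ n).mulVec v)) ≤ ρ * euclNorm ((W ^ n).mulVec v) :=
              hcontract _ h2
          _ ≤ ρ * (ρ ^ n * euclNorm v) := by
              apply mul_le_mul_of_nonneg_left h1 hρ
          _ = ρ ^ (n + 1) * euclNorm v := by ring
      · rw [heq]; exact horth _ h2
  -- row sums of W^c are 1
  have hrow : ∀ n : ℕ, (W ^ n).mulVec (fun _ => 1) = fun _ => 1 := by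
    intro n
    induction n with
    | zero => simp [Matrix.one_mulVec]
    | succ n ih => rw [pow_succ', ← Matrix.mulVec_mulVec, ih, hW1]
  have hrowsum : ∑ j, (W ^ c) i j = 1 := by
    have := congrFun (hrow c) i
    simpa [Matrix.mulVec, dotProduct] using this
  -- the vector x = e_i - (1/m)𝟙
  set x : Fin m → ℝ := fun j => (if j = i then (1 : ℝ) else 0) - (m : ℝ)⁻¹ with hx
  have hxorth : x ⬝ᵥ (fun _ => 1) = 0 := by
    simp [hx, dotProduct, Finset.sum_sub_distrib, mul_comm, hm0]
  -- v_j = (W^c)_{ij} - 1/m  equals  ((W^c).mulVec x) j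
  set v : Fin m → ℝ := (W ^ c).mulVec x with hv
  have hWc_symm : (W ^ c).IsSymm := hW.pow c
  have hvj : ∀ j, v j = (W ^ c) i j - (m : ℝ)⁻¹ := by
    intro j
    have hsym : (W ^ c) j i = (W ^ c) i j := by
      conv_lhs => rw [← hWc_symm.eq]
      rfl
    have hrj : ∑ l, (W ^ c) j l = 1 := by
      have := congrFun (hrow c) j
      simpa [Matrix.mulVec, dotProduct] using this
    simp only [hv, hx, Matrix.mulVec, dotProduct, mul_sub]
    rw [Finset.sum_sub_distrib, ← Finset.sum_mul, hrj, one_mul]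
    congr 1
    simp [Finset.sum_ite_eq', hsym]
  -- norm of x is at most 1
  have hxnorm : euclNorm x ≤ 1 := by
    rw [show (1:ℝ) = Real.sqrt 1 by simp]
    apply Real.sqrt_le_sqrt
    have hsum : ∑ j, x j ^ 2 = 1 - (m : ℝ)⁻¹ := by
      have : ∀ j, x j ^ 2 = (if j = i then (1:ℝ) else 0) - 2 * (m:ℝ)⁻¹ * (if j = i then (1:ℝ) else 0) + (m:ℝ)⁻¹ ^ 2 := by
        intro j
        by_cases h : j = i <;> simp [hx, h] <;> ring
      rw [Finset.sum_congr rfl fun j _ => this j]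
      rw [Finset.sum_add_distrib, Finset.sum_sub_distrib, ← Finset.mul_sum]
      simp [Finset.sum_ite_eq', Finset.card_univ]
      field_simp
      ring
    rw [hsum]
    have : 0 < (m : ℝ)⁻¹ := by positivity
    linarith
  have hvnorm : euclNorm v ≤ ρ ^ c := by
    calc euclNorm v ≤ ρ ^ c * euclNorm x := (hpow c x hxorth).1
      _ ≤ ρ ^ c * 1 := mul_le_mul_of_nonneg_left hxnorm (pow_nonneg hρ c)
      _ = ρ ^ c := mul_one _
  -- sum of v_j is 0
  have hvsum : ∑ j, v j = 0 := by
    rw [Finset.sum_congr rfl fun j _ => hvj j, Finset.sum_sub_distrib, hrowsum]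
    simp [Finset.card_univ, hm0]
  -- rewrite the error vector
  set zbar : Fin d → ℝ := (m : ℝ)⁻¹ • ∑ l, z l with hzbar
  have herr : (∑ j, z j) - (m : ℝ) • ∑ j, (W ^ c) i j • z j
      = ∑ j, (-(m : ℝ) * v j) • (z j - zbar) := by
    have expand : ∀ j, (-(m : ℝ) * v j) • (z j - zbar)
        = z j - (m : ℝ) • ((W ^ c) i j • z j) - (-(m : ℝ) * v j) • zbar := by
      intro j
      rw [hvj j, smul_sub]
      congr 1
      funext k
      simp [smul_smul]
      field_simp
      ring
    rw [Finset.sum_congr rfl fun j _ => expand j]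
    rw [Finset.sum_sub_distrib, Finset.sum_sub_distrib, ← Finset.sum_smul, ← Finset.smul_sum]
    have : ∑ j, -(m : ℝ) * v j = 0 := by
      rw [← Finset.mul_sum, hvsum, mul_zero]
    rw [this, zero_smul, sub_zero]
  rw [herr]
  calc euclNorm (∑ j, (-(m : ℝ) * v j) • (z j - zbar))
      ≤ Real.sqrt (∑ j, (-(m : ℝ) * v j) ^ 2) *
          Real.sqrt (∑ j, euclNorm (z j - zbar) ^ 2) :=
        euclNorm_sum_smul_le _ _
    _ ≤ (m : ℝ) * ρ ^ c * Real.sqrt (∑ j, euclNorm (z j - zbar) ^ 2) := by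
        apply mul_le_mul_of_nonneg_right _ (Real.sqrt_nonneg _)
        have : ∑ j, (-(m : ℝ) * v j) ^ 2 = (m : ℝ) ^ 2 * ∑ j, v j ^ 2 := by
          rw [Finset.mul_sum]; exact Finset.sum_congr rfl fun j _ => by ring
        rw [this, Real.sqrt_mul (sq_nonneg _), Real.sqrt_sq (by positivity)]
        exact mul_le_mul_of_nonneg_left hvnorm (by positivity)
end

section
/- Let n ≥ 2 and T, α, σ_q, σ_p(1), …, σ_p(T) be given with α > 0, σ_q > 0, σ_p(k) ≥ 0. Let A be an n×n real symmetric positive semidefinite matrix with largest eigenvalue λ₁ and second largest eigenvalue λ₂ satisfying λ₁ > λ₂, and let v be a unit eigenvector of A for λ₁. Let Ξ be an n×n real symmetric positive semidefinite matrix with eigenvalues μ₁ > μ₂ ≥ … ≥ μ_n > 0 and corresponding orthonormal eigenvectors u₁, …, u_n, and suppose E := ‖Ξ − A‖₂ satisfies E ≤ λ₁ − λ₂. Define Ω := σ_q²·(αΞ)^{2T} + Σ_{k=1}^{T} σ_p(k)²·(αΞ)^{2(T−k)} and ρ := (σ_q² + Σ_{k=1}^T (αμ₂)^{−2k} σ_p(k)²)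 / (σ_q² + Σ_{k=1}^T (αμ₁)^{−2k} σ_p(k)²). Then 1 − (vᵀΩv)/trace(Ω) ≤ 2·(E/(λ₁ − λ₂) + (n−1)·ρ·(μ₂/μ₁)^{2T}). -/
open Matrix Finset

/-- The spectral (ℓ²-operator) norm of a real matrix. -/
noncomputable def specNorm {n : ℕ} (M : Matrix (Fin n) (Fin n) ℝ) : ℝ :=
  ‖Matrix.toEuclideanCLM (𝕜 := ℝ) M‖

/-!
Write `cᵢ = uᵢ ⬝ᵥ v` for the coordinates of `v` in the eigenbasis of `Ξ` (indices start at `0`).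
Being a polynomial in `Ξ`, `Ω` has the eigenvectors `uᵢ`, with eigenvalues
`fᵢ = iterateCov σq σp T (α μᵢ)`, so `vᵀΩv / tr Ω = ∑ fᵢ cᵢ² / ∑ fᵢ`. As `∑ cᵢ² = 1`, the defect
of this weighted average from `1` is at most `1 - c₀² + ∑_{i ≠ 0} fᵢ / f₀`, and monotonicity of
`f` bounds the sum by `(n - 1) f₁ / f₀`, which is the second term of the bound.
For the first term (Davis–Kahan), compare `A` and `Ξ` along `v` to get `λ₁ - μ₀ ≤ E`, and along
`u₀` and its component `w` orthogonal to `v` to get `(μ₀ - λ₂)(1 - c₀²) ≤ E`; adding,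
`(λ₁ - λ₂)(1 - c₀²) ≤ 2E`.
-/

section Orthonormal

variable {ι R : Type*} [Fintype ι] [DecidableEq ι] [CommRing R] {U M : Matrix ι ι R} {f : ι → R}

theorem Matrix.mul_transpose_eq_one_of_dotProduct
    (hU : ∀ i j, U i ⬝ᵥ U j = if i = j then 1 else 0) : U * Uᵀ = 1 := by
  ext i j
  simpa [Matrix.mul_apply', Matrix.one_apply] using hU i j

theorem Matrix.eq_transpose_mul_diagonal_mul (hU : Uᵀ * U = 1)
    (hM : ∀ i, M *ᵥ U i = f i • U i) : M = Uᵀ * diagonal f * U := by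
  have hMUt : M * Uᵀ = Uᵀ * diagonal f := by
    ext j i
    have hMj := congrFun (hM i) j
    simp only [Matrix.mulVec, dotProduct, Pi.smul_apply, smul_eq_mul] at hMj
    rw [Matrix.mul_diagonal, Matrix.transpose_apply, mul_comm, ← hMj, Matrix.mul_apply]
    rfl
  calc M = M * Uᵀ * U := by rw [Matrix.mul_assoc, hU, Matrix.mul_one]
    _ = Uᵀ * diagonal f * U := by rw [hMUt]

theorem Matrix.trace_eq_sum_of_eigenrows (hU : U * Uᵀ = 1)
    (hM : ∀ i, M *ᵥ U i = f i • U i) : M.trace = ∑ i, f i := by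
  rw [Matrix.eq_transpose_mul_diagonal_mul (mul_eq_one_comm.mp hU) hM, Matrix.trace_mul_cycle,
    hU, Matrix.one_mul, Matrix.trace_diagonal]

theorem Matrix.dotProduct_mulVec_eq_sum_of_eigenrows (hU : U * Uᵀ = 1)
    (hM : ∀ i, M *ᵥ U i = f i • U i) (x : ι → R) :
    x ⬝ᵥ M *ᵥ x = ∑ i, f i * (U *ᵥ x) i ^ 2 := by
  rw [Matrix.eq_transpose_mul_diagonal_mul (mul_eq_one_comm.mp hU) hM, ← Matrix.mulVec_mulVec,
    ← Matrix.mulVec_mulVec, Matrix.dotProduct_mulVec, Matrix.vecMul_transpose]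
  simp only [Matrix.mulVec_diagonal, dotProduct]
  exact Finset.sum_congr rfl fun i _ => by ring

theorem Matrix.sum_sq_mulVec_eq_dotProduct (hU : U * Uᵀ = 1) (x : ι → R) :
    ∑ i, (U *ᵥ x) i ^ 2 = x ⬝ᵥ x := by
  simpa using (Matrix.dotProduct_mulVec_eq_sum_of_eigenrows (M := 1) (f := 1) hU
    (by simp) x).symm

end Orthonormal

theorem Matrix.dotProduct_mulVec_le_of_eigenrows {ι : Type*} [Fintype ι] [DecidableEq ι]
    {U M : Matrix ι ι ℝ} {f : ι → ℝ} {b : ℝ} (hU : U * Uᵀ = 1)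
    (hM : ∀ i, M *ᵥ U i = f i • U i) (hf : ∀ i, f i ≤ b) (x : ι → ℝ) :
    x ⬝ᵥ M *ᵥ x ≤ b * (x ⬝ᵥ x) := by
  rw [Matrix.dotProduct_mulVec_eq_sum_of_eigenrows hU hM, ← Matrix.sum_sq_mulVec_eq_dotProduct hU,
    Finset.mul_sum]
  exact Finset.sum_le_sum fun i _ => mul_le_mul_of_nonneg_right (hf i) (sq_nonneg _)

theorem Matrix.pow_mulVec_of_mulVec_eq_smul {ι R : Type*} [Fintype ι] [DecidableEq ι] [CommRing R]
    {M : Matrix ι ι R} {x : ι → R} {a : R} (h : M *ᵥ x = a • x) (m : ℕ) :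
    (M ^ m) *ᵥ x = a ^ m • x := by
  induction m with
  | zero => simp
  | succ m ih =>
    rw [pow_succ, ← Matrix.mulVec_mulVec, h, Matrix.mulVec_smul, ih, smul_smul, ← pow_succ']

theorem specNorm_nonneg {n : ℕ} (M : Matrix (Fin n) (Fin n) ℝ) : 0 ≤ specNorm M :=
  norm_nonneg _

theorem dotProduct_mulVec_le_specNorm {n : ℕ} (M : Matrix (Fin n) (Fin n) ℝ) {x y : Fin n → ℝ}
    (hx : x ⬝ᵥ x ≤ 1) (hy : y ⬝ᵥ y ≤ 1) : x ⬝ᵥ M *ᵥ y ≤ specNorm M := by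
  have norm_le_one : ∀ z : Fin n → ℝ, z ⬝ᵥ z ≤ 1 → ‖WithLp.toLp 2 z‖ ≤ 1 := fun z hz => by
    rw [← sq_le_one_iff₀ (norm_nonneg _), ← real_inner_self_eq_norm_sq,
      EuclideanSpace.inner_toLp_toLp]
    simpa using hz
  calc x ⬝ᵥ M *ᵥ y
      = inner ℝ (WithLp.toLp 2 x) (Matrix.toEuclideanCLM (𝕜 := ℝ) M (WithLp.toLp 2 y)) :=
        (Matrix.inner_toEuclideanCLM M _ _).symm
    _ ≤ ‖WithLp.toLp 2 x‖ * (specNorm M * ‖WithLp.toLp 2 y‖) := by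
        grw [real_inner_le_norm, ContinuousLinearMap.le_opNorm]; rfl
    _ ≤ 1 * (specNorm M * 1) := by
        have := specNorm_nonneg M
        gcongr <;> exact norm_le_one _ ‹_›
    _ = specNorm M := by ring

theorem one_sub_sq_dotProduct_le_specNorm_div {n : ℕ} {A Ξ : Matrix (Fin n) (Fin n) ℝ}
    {lam₁ lam₂ μ : ℝ} {v u : Fin n → ℝ} (hgap : lam₂ < lam₁)
    (hv_unit : v ⬝ᵥ v = 1) (hv_eig : A *ᵥ v = lam₁ • v)
    (hlam₂ : ∀ w : Fin n → ℝ, w ⬝ᵥ v = 0 → w ⬝ᵥ A *ᵥ w ≤ lam₂ * (w ⬝ᵥ w))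
    (hu_unit : u ⬝ᵥ u = 1) (hu_eig : Ξ *ᵥ u = μ • u) (hμ : v ⬝ᵥ Ξ *ᵥ v ≤ μ) :
    1 - (u ⬝ᵥ v) ^ 2 ≤ 2 * (specNorm (Ξ - A) / (lam₁ - lam₂)) := by
  set c := u ⬝ᵥ v
  have hvu : v ⬝ᵥ u = c := dotProduct_comm v u
  have hμ_top : lam₁ - μ ≤ specNorm (Ξ - A) := by
    have h := dotProduct_mulVec_le_specNorm (Ξ - A) (x := -v) (by simpa using hv_unit.le)
      hv_unit.le
    simp only [Matrix.sub_mulVec, hv_eig, neg_dotProduct, dotProduct_sub, dotProduct_smul,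
      hv_unit, smul_eq_mul] at h
    linarith
  set w := u - c • v
  have hwv : w ⬝ᵥ v = 0 := by
    simp [w, sub_dotProduct, hv_unit, c]
  have hwu : w ⬝ᵥ u = 1 - c ^ 2 := by
    simp only [w, sub_dotProduct, smul_dotProduct, hu_unit, hvu, smul_eq_mul]; ring
  have hww : w ⬝ᵥ w = 1 - c ^ 2 := by
    rw [dotProduct_sub, dotProduct_smul, hwu, hwv]; simp
  have hww_nonneg : 0 ≤ w ⬝ᵥ w := dotProduct_self_star_nonneg w
  have hμ_perp : (μ - lam₂) * (1 - c ^ 2) ≤ specNorm (Ξ - A) := by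
    have h := dotProduct_mulVec_le_specNorm (Ξ - A) (x := w) (by linarith [sq_nonneg c]) hu_unit.le
    have hwAu : w ⬝ᵥ A *ᵥ u = w ⬝ᵥ A *ᵥ w := by
      have : u = w + c • v := by simp [w]
      rw [this, Matrix.mulVec_add, Matrix.mulVec_smul, hv_eig, dotProduct_add, dotProduct_smul,
        dotProduct_smul, hwv]
      simp
    rw [Matrix.sub_mulVec, dotProduct_sub, hu_eig, dotProduct_smul, hwu, hwAu, smul_eq_mul] at h
    have hAw := hlam₂ w hwv
    rw [hww] at hAw
    linarith
  rw [← mul_div_assoc, le_div_iff₀ (by linarith)]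
  nlinarith [specNorm_nonneg (Ξ - A)]

-- At `a = α • Ξ` this is the paper's `Ω`; at `a = α * μᵢ` it is the eigenvalue of `Ω` along `uᵢ`.
def iterateCov {R : Type*} [Semiring R] [Module ℝ R] (σq : ℝ) (σp : ℕ → ℝ) (T : ℕ) (a : R) : R :=
  σq ^ 2 • a ^ (2 * T) + ∑ k ∈ Icc 1 T, σp k ^ 2 • a ^ (2 * (T - k))

section IterateCov

variable (σq : ℝ) (σp : ℕ → ℝ) (T : ℕ)

theorem iterateCov_mulVec_of_mulVec_eq_smul {ι : Type*} [Fintype ι] [DecidableEq ι]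
    {M : Matrix ι ι ℝ} {x : ι → ℝ} {a : ℝ} (h : M *ᵥ x = a • x) :
    iterateCov σq σp T M *ᵥ x = iterateCov σq σp T a • x := by
  simp only [iterateCov, Matrix.add_mulVec, Matrix.sum_mulVec, Matrix.smul_mulVec,
    Matrix.pow_mulVec_of_mulVec_eq_smul h, smul_smul, add_smul, Finset.sum_smul, smul_eq_mul]

theorem iterateCov_pos {a : ℝ} (hσq : 0 < σq) (ha : 0 < a) : 0 < iterateCov σq σp T a := by
  unfold iterateCov
  have := Finset.sum_nonneg fun k (_ : k ∈ Icc 1 T) =>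
    mul_nonneg (sq_nonneg (σp k)) (pow_nonneg ha.le (2 * (T - k)))
  simp only [smul_eq_mul]
  positivity

theorem iterateCov_mono {a b : ℝ} (ha : 0 ≤ a) (hab : a ≤ b) :
    iterateCov σq σp T a ≤ iterateCov σq σp T b := by
  unfold iterateCov
  simp only [smul_eq_mul]
  gcongr

theorem iterateCov_eq_pow_mul {a : ℝ} (ha : a ≠ 0) :
    iterateCov σq σp T a = a ^ (2 * T) * (σq ^ 2 + ∑ k ∈ Icc 1 T, (a ^ (2 * k))⁻¹ * σp k ^ 2) := by
  rw [iterateCov, mul_add, Finset.mul_sum, smul_eq_mul, mul_comm]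
  congr 1
  refine Finset.sum_congr rfl fun k hk => ?_
  rw [smul_eq_mul, mul_tsub, pow_sub₀ a ha (by have := (Finset.mem_Icc.mp hk).2; omega)]
  ring

theorem iterateCov_div_iterateCov {α μ₀ μ₁ : ℝ} (hα : α ≠ 0) (hμ₀ : μ₀ ≠ 0) (hμ₁ : μ₁ ≠ 0) :
    iterateCov σq σp T (α * μ₁) / iterateCov σq σp T (α * μ₀)
      = (σq ^ 2 + ∑ k ∈ Icc 1 T, ((α * μ₁) ^ (2 * k))⁻¹ * σp k ^ 2) /
          (σq ^ 2 + ∑ k ∈ Icc 1 T, ((α * μ₀) ^ (2 * k))⁻¹ * σp k ^ 2) * (μ₁ / μ₀) ^ (2 * T) := by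
  rw [iterateCov_eq_pow_mul _ _ _ (mul_ne_zero hα hμ₁), iterateCov_eq_pow_mul _ _ _
    (mul_ne_zero hα hμ₀), mul_div_mul_comm, ← div_pow, mul_div_mul_left _ _ hα, mul_comm]

end IterateCov

theorem one_sub_sum_mul_sq_div_sum_le {ι : Type*} [Fintype ι] [DecidableEq ι] {f c : ι → ℝ}
    {B : ℝ} (hf : ∀ i, 0 < f i) (hc : ∑ i, c i ^ 2 = 1) (i₀ : ι) (hB : ∀ i ≠ i₀, f i ≤ B) :
    1 - (∑ i, f i * c i ^ 2) / ∑ i, f i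
      ≤ (1 - c i₀ ^ 2) + (Fintype.card ι - 1) * B / f i₀ := by
  set R := ∑ i ∈ univ.erase i₀, f i
  have hc₀ : c i₀ ^ 2 ≤ 1 :=
    hc ▸ Finset.single_le_sum (fun i _ => sq_nonneg (c i)) (mem_univ i₀)
  have hf₀S : f i₀ ≤ ∑ i, f i := Finset.single_le_sum (fun i _ => (hf i).le) (mem_univ i₀)
  have hR_nonneg : 0 ≤ R := Finset.sum_nonneg fun i _ => (hf i).le
  have hRB : R ≤ (Fintype.card ι - 1) * B := by
    have h := Finset.sum_le_card_nsmul (univ.erase i₀) f B fun i hi =>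
      hB i (Finset.ne_of_mem_erase hi)
    rwa [Finset.card_erase_of_mem (mem_univ i₀), card_univ, nsmul_eq_mul,
      Nat.cast_pred (Fintype.card_pos_iff.mpr ⟨i₀⟩)] at h
  have hdefect : ∑ i, f i - ∑ i, f i * c i ^ 2 ≤ (1 - c i₀ ^ 2) * f i₀ + R := by
    rw [← Finset.sum_sub_distrib, ← Finset.add_sum_erase _ _ (mem_univ i₀)]
    have : ∑ i ∈ univ.erase i₀, (f i - f i * c i ^ 2) ≤ R :=
      Finset.sum_le_sum fun i _ => by nlinarith [hf i, sq_nonneg (c i)]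
    linarith
  have hS : 0 < ∑ i, f i := lt_of_lt_of_le (hf i₀) hf₀S
  calc 1 - (∑ i, f i * c i ^ 2) / ∑ i, f i
      = (∑ i, f i - ∑ i, f i * c i ^ 2) / ∑ i, f i := by rw [one_sub_div hS.ne']
    _ ≤ ((1 - c i₀ ^ 2) * f i₀ + R) / ∑ i, f i := by gcongr
    _ = (1 - c i₀ ^ 2) * (f i₀ / ∑ i, f i) + R / ∑ i, f i := by ring
    _ ≤ (1 - c i₀ ^ 2) * 1 + R / f i₀ := by
        have : 0 ≤ 1 - c i₀ ^ 2 := by linarith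
        gcongr
        · exact (div_le_one hS).mpr hf₀S
        · exact hf i₀
    _ ≤ (1 - c i₀ ^ 2) + (Fintype.card ι - 1) * B / f i₀ := by
        rw [mul_one]; gcongr; exact (hf i₀).le

/-- Deterministic spectral part of Theorem 3: the misalignment of the covariance
`Ω` of the final iterate with the true principal eigenvector `v` of `A` is bounded by
the Davis–Kahan perturbation term plus the geometric decay of the non-principal
variance components. -/
theorem stmt_14 (n T : ℕ) (hn : 2 ≤ n) (α σq : ℝ) (σp : ℕ → ℝ)
    (hα : 0 < α) (hσq : 0 < σq)
    (A : Matrix (Fin n) (Fin n) ℝ)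
    (lam₁ lam₂ : ℝ) (hgap : lam₂ < lam₁)
    (v : Fin n → ℝ) (hv_unit : v ⬝ᵥ v = 1) (hv_eig : A.mulVec v = lam₁ • v)
    (hlam₂ : ∀ w : Fin n → ℝ, w ⬝ᵥ v = 0 → w ⬝ᵥ (A.mulVec w) ≤ lam₂ * (w ⬝ᵥ w))
    (Ξ : Matrix (Fin n) (Fin n) ℝ)
    (μ : Fin n → ℝ) (u : Fin n → (Fin n → ℝ))
    (hu : ∀ i j, u i ⬝ᵥ u j = if i = j then 1 else 0)
    (heig : ∀ i, Ξ.mulVec (u i) = μ i • u i)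
    (hμ_pos : ∀ i, 0 < μ i)
    (hμ_anti : ∀ i j : Fin n, i ≤ j → μ j ≤ μ i) :
    1 - (v ⬝ᵥ ((σq ^ 2 • (α • Ξ) ^ (2 * T) +
            ∑ k ∈ Finset.Icc 1 T, σp k ^ 2 • (α • Ξ) ^ (2 * (T - k))).mulVec v)) /
          (σq ^ 2 • (α • Ξ) ^ (2 * T) +
            ∑ k ∈ Finset.Icc 1 T, σp k ^ 2 • (α • Ξ) ^ (2 * (T - k))).trace ≤
      2 * (specNorm (Ξ - A) / (lam₁ - lam₂) +
        ((n : ℝ) - 1) *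
          ((σq ^ 2 + ∑ k ∈ Finset.Icc 1 T,
              ((α * μ (⟨1, by omega⟩ : Fin n)) ^ (2 * k))⁻¹ * σp k ^ 2) /
            (σq ^ 2 + ∑ k ∈ Finset.Icc 1 T,
              ((α * μ (⟨0, by omega⟩ : Fin n)) ^ (2 * k))⁻¹ * σp k ^ 2)) *
          (μ (⟨1, by omega⟩ : Fin n) / μ (⟨0, by omega⟩ : Fin n)) ^ (2 * T)) := by
  set i₀ : Fin n := ⟨0, by omega⟩
  set i₁ : Fin n := ⟨1, by omega⟩
  set f := fun i => iterateCov σq σp T (α * μ i)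
  have hU : Matrix.of u * (Matrix.of u)ᵀ = 1 := Matrix.mul_transpose_eq_one_of_dotProduct hu
  have hΩ : ∀ i, iterateCov σq σp T (α • Ξ) *ᵥ u i = f i • u i := fun i =>
    iterateCov_mulVec_of_mulVec_eq_smul _ _ _ (by rw [Matrix.smul_mulVec, heig, smul_smul])
  have hc : ∑ i, (Matrix.of u *ᵥ v) i ^ 2 = 1 :=
    (Matrix.sum_sq_mulVec_eq_dotProduct hU v).trans hv_unit
  have hΞ_top : v ⬝ᵥ Ξ *ᵥ v ≤ μ i₀ := by
    simpa [hv_unit] using Matrix.dotProduct_mulVec_le_of_eigenrows hU heig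
      (fun i => hμ_anti i₀ i (Nat.zero_le i)) v
  have hDK : 1 - (Matrix.of u *ᵥ v) i₀ ^ 2 ≤ 2 * (specNorm (Ξ - A) / (lam₁ - lam₂)) :=
    one_sub_sq_dotProduct_le_specNorm_div hgap hv_unit hv_eig hlam₂ (by simpa using hu i₀ i₀)
      (heig i₀) hΞ_top
  have hf_le : ∀ i ≠ i₀, f i ≤ f i₁ := fun i hi =>
    iterateCov_mono _ _ _ (mul_pos hα (hμ_pos i)).le <| mul_le_mul_of_nonneg_left
      (hμ_anti i₁ i (Nat.one_le_iff_ne_zero.mpr fun h => hi (Fin.ext h))) hα.le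
  have hf : ∀ i, 0 < f i := fun i => iterateCov_pos σq σp T hσq (mul_pos hα (hμ_pos i))
  have key : 1 - (∑ i, f i * (Matrix.of u *ᵥ v) i ^ 2) / ∑ i, f i
      ≤ (1 - (Matrix.of u *ᵥ v) i₀ ^ 2) + ((n : ℝ) - 1) * (f i₁ / f i₀) := by
    simpa only [Fintype.card_fin, mul_div_assoc] using one_sub_sum_mul_sq_div_sum_le hf hc i₀ hf_le
  have hratio_nonneg : 0 ≤ ((n : ℝ) - 1) * (f i₁ / f i₀) :=
    mul_nonneg (by linarith [show (2 : ℝ) ≤ n by exact_mod_cast hn]) (div_pos (hf i₁) (hf i₀)).le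
  have hratio : f i₁ / f i₀ = _ :=
    iterateCov_div_iterateCov σq σp T hα.ne' (hμ_pos i₀).ne' (hμ_pos i₁).ne'
  rw [hratio, ← mul_assoc] at key hratio_nonneg
  change 1 - v ⬝ᵥ iterateCov σq σp T (α • Ξ) *ᵥ v / (iterateCov σq σp T (α • Ξ)).trace ≤ _
  rw [Matrix.trace_eq_sum_of_eigenrows hU hΩ, Matrix.dotProduct_mulVec_eq_sum_of_eigenrows hU hΩ]
  linarith
end
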